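/- Let μ_n denote the average number of summands in the Zeckendorf decomposition of integers N ∈ [F_n, F_{n+1}), i.e., μ_n = (Σ_{N=F_n}^{F_{n+1}−1} z(N))/(F_{n+1} − F_n) where z(N) is the number of summands of N. Then with φ = (1+√5)/2 there exists a constant M such that |μ_n − n/(φ² + 1)| ≤ M for all n ≥ 1; in particular μ_n/n → 1/(φ² + 1) as n → ∞. -/

import Mathlib

/-!
Every `N = F (n + 1) + r` with `r < F n` has Zeckendorf decomposition `{n + 1} ∪ S_r`, so
`A m := ∑_{r < F m} z r` obeys `A (m + 2) = A (m + 1) + A m + F m`, which solves to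
`5 A m = 2 m F m - (m + 1) fib m`. Hence `μ_{m+1} = 1 + A m / F m`, and Binet's formula
`ψ ^ (m + 1) = ψ F m + fib m` together with `1 / (φ² + 1) = (2 + ψ) / 5` gives
`μ_{m+1} - (m + 1) / (φ² + 1) = 3/5 - (m + 1) ψ ^ (m + 1) / (5 F m)`, whose error term is
at most `2/5` in absolute value because `|ψ| < 1` and `m + 1 ≤ 2 F m`.
-/

/-- `F n` is the Fibonacci number in the convention `F 1 = 1, F 2 = 2`,
`F (n+1) = F n + F (n-1)`, i.e. `F n = fib (n+1)`. -/
def F (n : ℕ) : ℕ := Nat.fib (n + 1)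

def IsZeckendorf (N : ℕ) (S : Finset ℕ) : Prop :=
  (∀ i ∈ S, 1 ≤ i) ∧ (∀ i ∈ S, i + 1 ∉ S) ∧ ∑ i ∈ S, F i = N

noncomputable def zeckMean (z : ℕ → ℕ) (n : ℕ) : ℝ :=
  (∑ N ∈ Finset.Ico (F n) (F (n + 1)), (z N : ℝ)) / ((F (n + 1) : ℝ) - (F n : ℝ))

open Finset Filter Topology Real goldenRatio

lemma F_add_two (n : ℕ) : F (n + 2) = F n + F (n + 1) := Nat.fib_add_two

lemma F_pos (n : ℕ) : 0 < F n := Nat.fib_pos.2 n.succ_pos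

namespace IsZeckendorf

lemma empty : IsZeckendorf 0 ∅ := by simp [IsZeckendorf]

lemma lt_of_mem {N m i : ℕ} {S : Finset ℕ} (h : IsZeckendorf N S) (hN : N < F m)
    (hi : i ∈ S) : i < m := by
  by_contra! hmi
  have hFi : F i ≤ N := h.2.2 ▸ single_le_sum (fun _ _ => Nat.zero_le _) hi
  have hFm : F m ≤ F i := Nat.fib_mono (by omega)
  omega

lemma insert_F {N n : ℕ} {S : Finset ℕ} (h : IsZeckendorf N S) (hN : N < F n) :
    IsZeckendorf (F (n + 1) + N) (insert (n + 1) S) := by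
  have hlt : ∀ i ∈ S, i < n := fun i hi => h.lt_of_mem hN hi
  refine ⟨?_, ?_, ?_⟩
  · simpa using h.1
  · simp only [mem_insert, forall_eq_or_imp]
    refine ⟨fun h' => ?_, fun i hi h' => ?_⟩
    · have := hlt _ (h'.resolve_left (by omega)); omega
    · rcases h' with h' | h'
      · have := hlt _ hi; omega
      · exact h.2.1 i hi h'
  · rw [sum_insert fun hn => by have := hlt _ hn; omega, h.2.2]

lemma card_insert_F {N n : ℕ} {S : Finset ℕ} (h : IsZeckendorf N S) (hN : N < F n) :
    (insert (n + 1) S).card = S.card + 1 :=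
  card_insert_of_notMem fun hn => by have := h.lt_of_mem hN hn; omega

end IsZeckendorf

lemma exists_isZeckendorf_of_lt_F : ∀ {n N : ℕ}, N < F n → ∃ S, IsZeckendorf N S
  | 0, N, hN | 1, N, hN => by
    obtain rfl : N = 0 := by simpa [F] using hN
    exact ⟨∅, .empty⟩
  | n + 2, N, hN => by
    by_cases h : N < F (n + 1)
    · exact exists_isZeckendorf_of_lt_F h
    · rw [F_add_two] at hN
      obtain ⟨S, hS⟩ := exists_isZeckendorf_of_lt_F (n := n) (N := N - F (n + 1)) (by omega)
      exact ⟨_, Nat.add_sub_of_le (not_lt.1 h) ▸ hS.insert_F (by omega)⟩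

lemma one_div_goldenRatio_sq_add_one : 1 / (φ ^ 2 + 1) = (2 + ψ) / 5 := by
  rw [goldenRatio_sq, div_eq_div_iff (by positivity) (by norm_num)]
  linear_combination -2 * goldenRatio_add_goldenConj - goldenRatio_mul_goldenConj

section SummandCount

variable {z : ℕ → ℕ} (hz : ∀ (N : ℕ) (S : Finset ℕ), IsZeckendorf N S → z N = S.card)
include hz

lemma z_F_succ_add {n r : ℕ} (hr : r < F n) : z (F (n + 1) + r) = z r + 1 := by
  obtain ⟨S, hS⟩ := exists_isZeckendorf_of_lt_F hr
  rw [hz _ _ (hS.insert_F hr), hz _ _ hS, hS.card_insert_F hr]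

lemma sum_z_Ico_F (n : ℕ) :
    ∑ N ∈ Ico (F (n + 1)) (F (n + 2)), z N = ∑ r ∈ range (F n), z r + F n := by
  rw [sum_Ico_eq_sum_range, F_add_two, Nat.add_sub_cancel,
    sum_congr rfl fun r hr => z_F_succ_add hz (mem_range.1 hr), sum_add_distrib, sum_const,
    card_range, smul_eq_mul, mul_one]

lemma five_mul_sum_z_range_F (m : ℕ) :
    5 * ∑ r ∈ range (F m), z r + (m + 1) * Nat.fib m = 2 * m * F m := by
  induction m using Nat.twoStepInduction with
  | zero | one => simp [F, hz 0 ∅ .empty]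
  | more m ih₀ ih₁ =>
    have hle : F (m + 1) ≤ F (m + 2) := F_add_two m ▸ Nat.le_add_left _ _
    rw [range_eq_Ico, ← sum_Ico_consecutive _ (Nat.zero_le _) hle, ← range_eq_Ico,
      sum_z_Ico_F hz]
    have h₀ : Nat.fib (m + 1) = F m := rfl
    have h₁ : F (m + 1) = Nat.fib m + F m := Nat.fib_add_two
    rw [h₀, h₁] at ih₁
    rw [F_add_two, h₁, show Nat.fib (m + 2) = F (m + 1) from rfl, h₁]
    linear_combination ih₀ + ih₁

lemma zeckMean_succ (m : ℕ) :
    zeckMean z (m + 1) = 1 + (∑ r ∈ range (F m), (z r : ℝ)) / F m := by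
  have hF : (F m : ℝ) ≠ 0 := by exact_mod_cast (F_pos m).ne'
  rw [zeckMean, ← Nat.cast_sum, sum_z_Ico_F hz, F_add_two]
  push_cast
  rw [add_sub_cancel_right, add_div, div_self hF, add_comm]

lemma zeckMean_succ_sub (m : ℕ) :
    zeckMean z (m + 1) - (m + 1) / (φ ^ 2 + 1) = 3 / 5 - (m + 1) * ψ ^ (m + 1) / (5 * F m) := by
  have hF : (F m : ℝ) ≠ 0 := by exact_mod_cast (F_pos m).ne'
  have hclosed : 5 * ∑ r ∈ range (F m), (z r : ℝ) + (m + 1) * Nat.fib m = 2 * m * F m := by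
    exact_mod_cast five_mul_sum_z_range_F hz m
  rw [zeckMean_succ hz, div_eq_mul_one_div _ (φ ^ 2 + 1), one_div_goldenRatio_sq_add_one,
    ← goldenConj_mul_fib_succ_add_fib, show (Nat.fib (m + 1) : ℝ) = F m from rfl]
  field_simp
  linear_combination 2 * hclosed

lemma abs_zeckMean_succ_sub_le (m : ℕ) :
    |zeckMean z (m + 1) - (m + 1) / (φ ^ 2 + 1)| ≤ 1 := by
  have hF : (0 : ℝ) < F m := by exact_mod_cast F_pos m
  have hψ : |ψ ^ (m + 1)| ≤ 1 := by
    rw [abs_pow]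
    exact pow_le_one₀ (abs_nonneg _)
      (abs_le.2 ⟨neg_one_lt_goldenConj.le, goldenConj_neg.le.trans zero_le_one⟩)
  have hm : (m + 1 : ℝ) ≤ 2 * F m := by
    have := Nat.le_fib_add_one (m + 1)
    have := F_pos m
    exact_mod_cast (by unfold F at *; omega : m + 1 ≤ 2 * F m)
  have herr : |(m + 1) * ψ ^ (m + 1) / (5 * F m)| ≤ 2 / 5 := by
    rw [abs_div, abs_mul, abs_of_pos (by positivity : (0 : ℝ) < m + 1),
      abs_of_pos (by positivity : (0 : ℝ) < 5 * F m),
      div_le_div_iff₀ (by positivity) (by norm_num)]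
    nlinarith
  rw [zeckMean_succ_sub hz]
  calc |3 / 5 - (m + 1) * ψ ^ (m + 1) / (5 * F m)|
      ≤ |(3 : ℝ) / 5| + |(m + 1) * ψ ^ (m + 1) / (5 * F m)| := abs_sub _ _
    _ ≤ 1 := by rw [abs_of_pos (by norm_num)]; linarith

end SummandCount

lemma tendsto_div_natCast_of_abs_sub_mul_le {a : ℕ → ℝ} {c M : ℝ}
    (h : ∀ n : ℕ, 1 ≤ n → |a n - n * c| ≤ M) :
    Tendsto (fun n : ℕ => a n / n) atTop (𝓝 c) := by
  have h₀ : Tendsto (fun n : ℕ => a n / n - c) atTop (𝓝 0) := by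
    refine squeeze_zero_norm' ?_ (tendsto_const_div_atTop_nhds_zero_nat M)
    filter_upwards [eventually_ge_atTop 1] with n hn
    have hn' : (0 : ℝ) < n := by exact_mod_cast hn
    rw [Real.norm_eq_abs, show a n / n - c = (a n - n * c) / n by field_simp, abs_div,
      Nat.abs_cast]
    exact div_le_div_of_nonneg_right (h n hn) hn'.le
  simpa using h₀.add_const c

/-- Lekkerkerker's theorem: with `φ = (1+√5)/2`, the average number `μ_n` of
Zeckendorf summands of integers in `[F n, F (n+1))` satisfies
`|μ_n − n/(φ²+1)| ≤ M` for some constant `M`; in particular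
`μ_n / n → 1/(φ²+1)`. -/
theorem lekkerkerker (z : ℕ → ℕ)
    (hz : ∀ (N : ℕ) (S : Finset ℕ), IsZeckendorf N S → z N = S.card) :
    (∃ M : ℝ, ∀ n : ℕ, 1 ≤ n →
        |zeckMean z n - n / (((1 + Real.sqrt 5) / 2) ^ 2 + 1)| ≤ M) ∧
    Filter.Tendsto (fun n : ℕ => zeckMean z n / n) Filter.atTop
      (nhds (1 / (((1 + Real.sqrt 5) / 2) ^ 2 + 1))) := by
  have hbound : ∀ n : ℕ, 1 ≤ n → |zeckMean z n - n / (φ ^ 2 + 1)| ≤ 1 := by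
    rintro (_ | m) hm
    · omega
    · exact_mod_cast abs_zeckMean_succ_sub_le hz m
  refine ⟨⟨1, hbound⟩, tendsto_div_natCast_of_abs_sub_mul_le (M := 1) fun n hn => ?_⟩
  rw [← div_eq_mul_one_div]
  exact hbound n hn
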